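/- Define H_α(θ) = (1-α)^{-1} E[X·1_{X > θ}]. Assume f is differentiable and Φ(θ) = f(θ) + θ f'(θ) is bounded with ‖Φ‖_∞ < ∞. Then H_α(θ_α) = ϑ_α and for all θ ∈ ℝ: |H_α(θ) - H_α(θ_α) + (θ_α f(θ_α)/(1-α))(θ - θ_α)| ≤ (‖Φ‖_∞ / (2(1-α))) (θ - θ_α)². -/

import Mathlib

/-!
Let `ν` be the law of `X`, `F` its distribution function and `G t = ∫_{x > t} x dν`. Then
`G t - G θ + θ (F t - F θ) = ∫_θ^t (θ - x) dν`, which is at most `|t - θ| |F t - F θ| = o(t - θ)`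
in absolute value; hence `G' θ = -θ f θ`, so `H' = -θ f / (1 - α)` and `H'' = -Φ / (1 - α)`, and
the estimate is Taylor's theorem at `θα` with the Lagrange remainder bounded by `‖Φ‖_∞ / (1 - α)`.
Continuity of `F` means that `ν` has no atom at `θα`, so the strict and non-strict tails agree.
-/

open MeasureTheory Set Filter Topology ProbabilityTheory Asymptotics

theorem abs_sub_sub_mul_le_of_hasDerivAt_of_le {ψ g : ℝ → ℝ} {a b M : ℝ}
    (hψ : ∀ t, HasDerivAt ψ (g t) t) (hg : ∀ t, |g t - g a| ≤ M * |t - a|) (hab : a ≤ b) :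
    |ψ b - ψ a - g a * (b - a)| ≤ M / 2 * (b - a) ^ 2 := by
  have hrem (t : ℝ) : HasDerivAt (fun s => ψ s - ψ a - g a * (s - a)) (g t - g a) t :=
    (((hψ t).sub_const (ψ a)).sub (((hasDerivAt_id' t).sub_const a).const_mul (g a))).congr_deriv
      (by ring)
  have hquad (t : ℝ) : HasDerivAt (fun s => M / 2 * (s - a) ^ 2) (M * (t - a)) t :=
    ((((hasDerivAt_id' t).sub_const a).pow 2).const_mul (M / 2)).congr_deriv (by ring)
  refine image_norm_le_of_norm_deriv_right_le_deriv_boundary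
    (fun t _ => (hrem t).continuousAt.continuousWithinAt) (fun t _ => (hrem t).hasDerivWithinAt)
    (by simp) hquad (fun t ht => ?_) ⟨hab, le_rfl⟩
  simpa [abs_of_nonneg (sub_nonneg.2 ht.1)] using hg t

theorem abs_sub_sub_mul_le_of_hasDerivAt {ψ g : ℝ → ℝ} {a M : ℝ}
    (hψ : ∀ t, HasDerivAt ψ (g t) t) (hg : ∀ t, |g t - g a| ≤ M * |t - a|) (b : ℝ) :
    |ψ b - ψ a - g a * (b - a)| ≤ M / 2 * (b - a) ^ 2 := by
  rcases le_total a b with hab | hba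
  · exact abs_sub_sub_mul_le_of_hasDerivAt_of_le hψ hg hab
  have hψneg (t : ℝ) : HasDerivAt (fun s => ψ (-s)) (-g (-t)) t :=
    ((hψ (-t)).comp t (hasDerivAt_neg' t)).congr_deriv (by ring)
  have hgneg (t : ℝ) : |-g (-t) - -g (-(-a))| ≤ M * |t - -a| := by
    rw [neg_neg, neg_sub_neg, abs_sub_comm, ← abs_neg (t - -a)]
    simpa [neg_add_eq_sub] using hg (-t)
  have := abs_sub_sub_mul_le_of_hasDerivAt_of_le hψneg hgneg (neg_le_neg hba)
  convert this using 2 <;> ring_nf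

theorem abs_sub_sub_mul_le_of_hasDerivAt_of_abs_le {ψ g g' : ℝ → ℝ} {M : ℝ}
    (hψ : ∀ t, HasDerivAt ψ (g t) t) (hg : ∀ t, HasDerivAt g (g' t) t) (hg' : ∀ t, |g' t| ≤ M)
    (a b : ℝ) : |ψ b - ψ a - g a * (b - a)| ≤ M / 2 * (b - a) ^ 2 :=
  abs_sub_sub_mul_le_of_hasDerivAt hψ (fun t =>
    Convex.norm_image_sub_le_of_norm_hasDerivWithin_le (fun x _ => (hg x).hasDerivWithinAt)
      (fun x _ => hg' x) convex_univ (mem_univ a) (mem_univ t)) b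

section TailIntegral

variable {ν : Measure ℝ} [IsFiniteMeasure ν]

theorem measureReal_Iic_sub_Iic (a b : ℝ) :
    ν.real (Iic b) - ν.real (Iic a) = ∫ _ in a..b, (1 : ℝ) ∂ν := by
  rw [← intervalIntegral.integral_Iic_sub_Iic (integrable_const 1).integrableOn
    (integrable_const 1).integrableOn]
  simp

theorem integral_Ioi_sub_add_mul_measureReal_Iic_sub (hν : Integrable (fun x => x) ν)
    (θ t : ℝ) :
    ∫ x in Ioi t, x ∂ν - ∫ x in Ioi θ, x ∂ν + θ * (ν.real (Iic t) - ν.real (Iic θ)) =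
      ∫ x in θ..t, (θ - x) ∂ν := by
  rw [intervalIntegral.integral_sub intervalIntegrable_const hν.intervalIntegrable,
    intervalIntegral.integral_const', measureReal_Iic_sub_Iic, intervalIntegral.integral_const',
    ← intervalIntegral.integral_Ioi_sub_Ioi' hν.integrableOn hν.integrableOn, smul_eq_mul,
    smul_eq_mul]
  ring

theorem abs_integral_Ioi_sub_add_mul_measureReal_Iic_sub_le (hν : Integrable (fun x => x) ν)
    (θ t : ℝ) :
    |∫ x in Ioi t, x ∂ν - ∫ x in Ioi θ, x ∂ν + θ * (ν.real (Iic t) - ν.real (Iic θ))| ≤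
      |t - θ| * |ν.real (Iic t) - ν.real (Iic θ)| := by
  have hmass : ν.real (uIoc θ t) = |ν.real (Iic t) - ν.real (Iic θ)| := by
    rw [measureReal_Iic_sub_Iic, intervalIntegral.abs_integral_eq_abs_integral_uIoc]
    simp [abs_of_nonneg measureReal_nonneg]
  rw [integral_Ioi_sub_add_mul_measureReal_Iic_sub hν, ← hmass,
    intervalIntegral.abs_integral_eq_abs_integral_uIoc, ← Real.norm_eq_abs]
  refine norm_setIntegral_le_of_norm_le_const (measure_lt_top _ _) fun x hx => ?_
  rw [Real.norm_eq_abs, abs_sub_comm]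
  exact abs_sub_left_of_mem_uIcc (uIoc_subset_uIcc hx)

theorem hasDerivAt_integral_Ioi_id (hν : Integrable (fun x => x) ν) {θ p : ℝ}
    (hF : HasDerivAt (fun t => ν.real (Iic t)) p θ) :
    HasDerivAt (fun t => ∫ x in Ioi t, x ∂ν) (-(θ * p)) θ := by
  have hF0 : Tendsto (fun t => ν.real (Iic t) - ν.real (Iic θ)) (𝓝 θ) (𝓝 0) := by
    simpa using hF.continuousAt.tendsto.sub_const (ν.real (Iic θ))
  have hsmall : (fun t => (t - θ) * (ν.real (Iic t) - ν.real (Iic θ))) =o[𝓝 θ] fun t => t - θ :=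
    ((isBigO_refl _ _).mul_isLittleO ((isLittleO_one_iff ℝ).2 hF0)).congr_right fun t => mul_one _
  have hflat : HasDerivAt (fun t => ∫ x in Ioi t, x ∂ν + θ * ν.real (Iic t)) 0 θ := by
    rw [hasDerivAt_iff_isLittleO]
    refine IsBigO.trans_isLittleO (IsBigO.of_bound 1 (Eventually.of_forall fun t => ?_)) hsmall
    have hregroup : ∫ x in Ioi t, x ∂ν + θ * ν.real (Iic t) - (∫ x in Ioi θ, x ∂ν + θ * ν.real (Iic θ))
        - (t - θ) • (0 : ℝ) =
        ∫ x in Ioi t, x ∂ν - ∫ x in Ioi θ, x ∂ν + θ * (ν.real (Iic t) - ν.real (Iic θ)) := by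
      rw [smul_zero]; ring
    rw [hregroup, one_mul, Real.norm_eq_abs, Real.norm_eq_abs, abs_mul]
    exact abs_integral_Ioi_sub_add_mul_measureReal_Iic_sub_le hν θ t
  simpa only [add_sub_cancel_right, zero_sub] using hflat.fun_sub (hF.const_mul θ)

end TailIntegral

theorem measure_singleton_eq_zero_of_continuousAt_cdf {ν : Measure ℝ} [IsProbabilityMeasure ν]
    {θ : ℝ} (h : ContinuousAt (cdf ν) θ) : ν {θ} = 0 := by
  rw [← measure_cdf ν, StieltjesFunction.measure_singleton, h.continuousWithinAt.leftLim_eq,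
    sub_self, ENNReal.ofReal_zero]

theorem integral_indicator_comp_eq_setIntegral_map {Ω : Type*} [MeasurableSpace Ω]
    {μ : Measure Ω} {X : Ω → ℝ} (hX : AEMeasurable X μ) {s : Set ℝ} (hs : MeasurableSet s) :
    ∫ ω, s.indicator (fun x => x) (X ω) ∂μ = ∫ x in s, x ∂μ.map X := by
  rw [← integral_indicator hs, integral_map hX (measurable_id'.aestronglyMeasurable.indicator hs)]

theorem stmt_6_general {Ω : Type*} [MeasureSpace Ω] (μ : Measure Ω) [IsProbabilityMeasure μ]
    (X : Ω → ℝ) (hX : Integrable X μ)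
    (F : ℝ → ℝ) (hF : ∀ t : ℝ, F t = (μ {ω | X ω ≤ t}).toReal)
    (f f' : ℝ → ℝ) (hf : ∀ t : ℝ, HasDerivAt F (f t) t)
    (hf' : ∀ t : ℝ, HasDerivAt f (f' t) t)
    (Φ : ℝ → ℝ) (hΦ : ∀ t : ℝ, Φ t = f t + t * f' t)
    (MΦ : ℝ) (hMΦ : ∀ t : ℝ, |Φ t| ≤ MΦ)
    (α : ℝ) (hα : α ∈ Set.Ioo (0 : ℝ) 1)
    (θα : ℝ)
    (ϑα : ℝ) (hϑα : ϑα = (1 - α)⁻¹ * ∫ ω, (if θα ≤ X ω then X ω else 0) ∂μ)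
    (H : ℝ → ℝ)
    (hH : ∀ θ : ℝ, H θ = (1 - α)⁻¹ * ∫ ω, (if θ < X ω then X ω else 0) ∂μ) :
    H θα = ϑα ∧
      ∀ θ : ℝ, |H θ - H θα + θα * f θα / (1 - α) * (θ - θα)| ≤
        MΦ / (2 * (1 - α)) * (θ - θα) ^ 2 := by
  have hXm : AEMeasurable X μ := hX.aemeasurable
  set ν := μ.map X
  have : IsProbabilityMeasure ν := Measure.isProbabilityMeasure_map hXm
  have hν : Integrable (fun x => x) ν := (integrable_map_measure aestronglyMeasurable_id hXm).2 hX
  have hFν : F = fun t => ν.real (Iic t) := funext fun t => by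
    rw [hF, measureReal_def, Measure.map_apply_of_aemeasurable hXm measurableSet_Iic]; rfl
  have hHν (θ : ℝ) : H θ = (1 - α)⁻¹ * ∫ x in Ioi θ, x ∂ν := by
    rw [hH, ← integral_indicator_comp_eq_setIntegral_map hXm measurableSet_Ioi]; rfl
  refine ⟨?_, fun θ => ?_⟩
  · have hatom : ν {θα} = 0 := by
      refine measure_singleton_eq_zero_of_continuousAt_cdf ?_
      simpa [hFν, ← cdf_eq_real] using (hf θα).continuousAt
    have hϑν : ϑα = (1 - α)⁻¹ * ∫ x in Ici θα, x ∂ν := by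
      rw [hϑα, ← integral_indicator_comp_eq_setIntegral_map hXm measurableSet_Ici]; rfl
    rw [hHν, hϑν, setIntegral_congr_set (Ioi_ae_eq_Ici' hatom)]
  · have h1α : 0 < 1 - α := sub_pos.2 hα.2
    have hH' (t : ℝ) : HasDerivAt H (-(t * f t) / (1 - α)) t := by
      rw [funext hHν]
      exact ((hasDerivAt_integral_Ioi_id hν (hFν ▸ hf t)).const_mul _).congr_deriv (by ring)
    have hH'' (t : ℝ) : HasDerivAt (fun s => -(s * f s) / (1 - α)) (-Φ t / (1 - α)) t :=
      ((((hasDerivAt_id' t).mul (hf' t)).neg).div_const _).congr_deriv (by rw [hΦ]; ring)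
    have hΦbound (t : ℝ) : |-Φ t / (1 - α)| ≤ MΦ / (1 - α) := by
      rw [abs_div, abs_neg, abs_of_pos h1α]
      exact div_le_div_of_nonneg_right (hMΦ t) h1α.le
    convert abs_sub_sub_mul_le_of_hasDerivAt_of_abs_le hH' hH'' hΦbound θα θ using 2
    · ring
    · rw [div_div, mul_comm]

theorem stmt_6 {Ω : Type*} [MeasureSpace Ω] (μ : Measure Ω) [IsProbabilityMeasure μ]
    (X : Ω → ℝ) (hX : Integrable X μ)
    (F : ℝ → ℝ) (hF : ∀ t : ℝ, F t = (μ {ω | X ω ≤ t}).toReal)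
    (f f' : ℝ → ℝ) (hf : ∀ t : ℝ, HasDerivAt F (f t) t)
    (hf' : ∀ t : ℝ, HasDerivAt f (f' t) t)
    (Φ : ℝ → ℝ) (hΦ : ∀ t : ℝ, Φ t = f t + t * f' t)
    (MΦ : ℝ) (hMΦ : ∀ t : ℝ, |Φ t| ≤ MΦ)
    (α : ℝ) (hα : α ∈ Set.Ioo (0 : ℝ) 1)
    (θα : ℝ) (hθα : F θα = α)
    (ϑα : ℝ) (hϑα : ϑα = (1 - α)⁻¹ * ∫ ω, (if θα ≤ X ω then X ω else 0) ∂μ)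
    (H : ℝ → ℝ)
    (hH : ∀ θ : ℝ, H θ = (1 - α)⁻¹ * ∫ ω, (if θ < X ω then X ω else 0) ∂μ) :
    H θα = ϑα ∧
      ∀ θ : ℝ, |H θ - H θα + θα * f θα / (1 - α) * (θ - θα)| ≤
        MΦ / (2 * (1 - α)) * (θ - θα) ^ 2 :=
  stmt_6_general μ X hX F hF f f' hf hf' Φ hΦ MΦ hMΦ α hα θα ϑα hϑα H hH
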